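/- For any irreducible n-variety X ⊆ U_{m,n}, the quotient T_{m,n}/I_T(X) is the trace ring of the prime k-algebra k_n[X]. -/
import Mathlib


set_option linter.unusedSectionVars false

noncomputable section

universe u

-- Throughout, `k` is an algebraically closed base field of characteristic zero.
variable (k : Type) [Field k] [IsAlgClosed k] [CharZero k]

/-- Index type for the `m·n²` commuting variables `x_{ij}^{(h)}`. -/
abbrev MIdx (n m : ℕ) := Fin m × Fin n × Fin n

/-- The commutative polynomial ring `k[x_{ij}^{(h)}]`. -/
abbrev PolyRing (n m : ℕ) := MvPolynomial (MIdx n m) k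

/-- Matrices over the polynomial ring `k[x_{ij}^{(h)}]`. -/
abbrev MatPoly (n m : ℕ) := Matrix (Fin n) (Fin n) (PolyRing k n m)

/-- The space `(M_n)^m` of `m`-tuples of `n×n` matrices over `k`. -/
abbrev MTuple (n m : ℕ) := Fin m → Matrix (Fin n) (Fin n) k

/-- The `h`-th generic `n×n` matrix `X_h = (x_{ij}^{(h)})`. -/
def genericMatrix (n m : ℕ) (h : Fin m) : MatPoly k n m :=
  Matrix.of fun i j => MvPolynomial.X (h, i, j)

/-- `G_{m,n}`, the algebra of `m` generic `n×n` matrices: the `k`-subalgebra of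
`M_n(k[x_{ij}^{(h)}])` generated by the generic matrices. -/
def GMN (n m : ℕ) : Subalgebra k (MatPoly k n m) :=
  Algebra.adjoin k (Set.range (genericMatrix k n m))

/-- Evaluation of the commuting variables at a point `a ∈ (M_n)^m`. -/
def polyEval {n m : ℕ} (a : MTuple k n m) : PolyRing k n m →ₐ[k] k :=
  MvPolynomial.aeval fun x : MIdx n m => a x.1 x.2.1 x.2.2

/-- Evaluation of matrix-valued polynomials at a point `a ∈ (M_n)^m`; under this
map an element of `G_{m,n}` (or `T_{m,n}`) becomes a `PGL_n`-equivariant polynomial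
map `(M_n)^m → M_n`. -/
def evalMat {n m : ℕ} (a : MTuple k n m) :
    MatPoly k n m →ₐ[k] Matrix (Fin n) (Fin n) k :=
  (polyEval k a).mapMatrix

/-- The scalar matrix `tr(p)·1 ∈ M_n(k[x_{ij}^{(h)}])`. -/
def traceScalar {n m : ℕ} (p : MatPoly k n m) : MatPoly k n m :=
  algebraMap (PolyRing k n m) (MatPoly k n m) (Matrix.trace p)

/-- `T_{m,n}`, the trace ring of `G_{m,n}`: the `k`-algebra generated inside
`M_n(k[x_{ij}^{(h)}])` by `G_{m,n}` together with the traces of its elements. -/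
def TMN (n m : ℕ) : Subalgebra k (MatPoly k n m) :=
  Algebra.adjoin k ((GMN k n m : Set (MatPoly k n m)) ∪
    (traceScalar k '' (GMN k n m : Set (MatPoly k n m))))

lemma GMN_le_TMN (n m : ℕ) : GMN k n m ≤ TMN k n m :=
  fun _ hx => Algebra.subset_adjoin (Or.inl hx)

/-- The inclusion `G_{m,n} → T_{m,n}`. -/
def inclGT (n m : ℕ) : ↥(GMN k n m) →+* ↥(TMN k n m) :=
  (Subalgebra.inclusion (GMN_le_TMN k n m) : ↥(GMN k n m) →ₐ[k] ↥(TMN k n m)).toRingHom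

/-- `U_{m,n}`: the set of `m`-tuples of `n×n` matrices generating `M_n` as a
`k`-algebra. -/
def genTuples (n m : ℕ) : Set (MTuple k n m) :=
  {a | Algebra.adjoin k (Set.range a) = ⊤}

/-- Simultaneous conjugation of an `m`-tuple by `g ∈ GL_n(k)`; since scalar
matrices act trivially, this is the `PGL_n`-action on `(M_n)^m`. -/
def conjAct {n m : ℕ} (g : GL (Fin n) k) (a : MTuple k n m) : MTuple k n m :=
  fun i =>
    (g : Matrix (Fin n) (Fin n) k) * a i * ((g⁻¹ : GL (Fin n) k) : Matrix (Fin n) (Fin n) k)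

/-- Zariski closed subsets of `(M_n)^m`. -/
def IsZClosed {n m : ℕ} (C : Set (MTuple k n m)) : Prop :=
  ∃ S : Set (PolyRing k n m), C = {a | ∀ p ∈ S, polyEval k a p = 0}

/-- `X` is an `n`-variety: a closed `PGL_n`-invariant subvariety of `U_{m,n}`,
i.e. `X = X̄ ∩ U_{m,n}` where `X̄` is the Zariski closure of `X` in `(M_n)^m`. -/
def IsNVariety {n m : ℕ} (X : Set (MTuple k n m)) : Prop :=
  X ⊆ genTuples k n m ∧
  (∀ g : GL (Fin n) k, ∀ a ∈ X, conjAct k g a ∈ X) ∧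
  ∃ C, IsZClosed k C ∧ X = C ∩ genTuples k n m

/-- Irreducibility of a subset of `(M_n)^m` with respect to the Zariski topology. -/
def IsIrredSubset {n m : ℕ} (X : Set (MTuple k n m)) : Prop :=
  X.Nonempty ∧ ∀ C₁ C₂ : Set (MTuple k n m), IsZClosed k C₁ → IsZClosed k C₂ →
    X ⊆ C₁ ∪ C₂ → X ⊆ C₁ ∨ X ⊆ C₂

/-- The zero locus in `U_{m,n}` of a set of matrix-valued polynomials. -/
def zeroLocus {n m : ℕ} (S : Set (MatPoly k n m)) : Set (MTuple k n m) :=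
  {a | a ∈ genTuples k n m ∧ ∀ p ∈ S, evalMat k a p = 0}

/-- The zero locus in `U_{m,n}` of a two-sided ideal of a subalgebra `A` of
`M_n(k[x_{ij}^{(h)}])` (such as `G_{m,n}` or `T_{m,n}`). -/
def zeroLocusI {n m : ℕ} {A : Subalgebra k (MatPoly k n m)} (J : TwoSidedIdeal ↥A) :
    Set (MTuple k n m) :=
  {a | a ∈ genTuples k n m ∧ ∀ p : ↥A, p ∈ J → evalMat k a (p : MatPoly k n m) = 0}

/-- The vanishing (two-sided) ideal of a subset `X ⊆ (M_n)^m` in a subalgebra `A`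
of `M_n(k[x_{ij}^{(h)}])`; for `A = G_{m,n}` this is `I(X)`, for `A = T_{m,n}`
this is `I_T(X)`. -/
def vanishIdeal {n m : ℕ} (A : Subalgebra k (MatPoly k n m)) (X : Set (MTuple k n m)) :
    TwoSidedIdeal ↥A :=
  TwoSidedIdeal.mk' {p : ↥A | ∀ a ∈ X, evalMat k a (p : MatPoly k n m) = 0}
    (fun a _ => by simp)
    (fun {p q} hp hq a ha => by
      have : ((p + q : ↥A) : MatPoly k n m) = (p : MatPoly k n m) + q := rfl
      simp [this, map_add, hp a ha, hq a ha])
    (fun {p} hp a ha => by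
      have : ((-p : ↥A) : MatPoly k n m) = -(p : MatPoly k n m) := rfl
      simp [this, map_neg, hp a ha])
    (fun {p q} hq a ha => by
      have : ((p * q : ↥A) : MatPoly k n m) = (p : MatPoly k n m) * q := rfl
      simp [this, map_mul, hq a ha])
    (fun {p q} hp a ha => by
      have : ((p * q : ↥A) : MatPoly k n m) = (p : MatPoly k n m) * q := rfl
      simp [this, map_mul, hp a ha])

/-- Restriction: a matrix-valued polynomial gives an `M_n`-valued function on `X`. -/
def restrictTo {n m : ℕ} (X : Set (MTuple k n m)) :
    MatPoly k n m →ₐ[k] (X → Matrix (Fin n) (Fin n) k) :=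
  Pi.algHom k _ fun a => evalMat k a.val

/-- The PI-coordinate ring `k_n[X] = G_{m,n}/I(X)`, realized concretely as the
algebra of all restrictions to `X` of elements of `G_{m,n}` (i.e. of
`PGL_n`-equivariant morphisms `X → M_n` coming from `G_{m,n}`). -/
def coordRing {n m : ℕ} (X : Set (MTuple k n m)) :
    Subalgebra k (X → Matrix (Fin n) (Fin n) k) :=
  (GMN k n m).map (restrictTo k X)

/-- The ring `T_{m,n}/I_T(X)`, realized concretely as the algebra of all
restrictions to `X` of elements of `T_{m,n}`. -/
def coordTraceRing {n m : ℕ} (X : Set (MTuple k n m)) :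
    Subalgebra k (X → Matrix (Fin n) (Fin n) k) :=
  (TMN k n m).map (restrictTo k X)

/-- A ring is prime if it is nonzero and `a·R·b = 0` implies `a = 0` or `b = 0`. -/
def IsPrimeRing (R : Type u) [Ring R] : Prop :=
  Nontrivial R ∧ ∀ a b : R, (∀ x : R, a * x * b = 0) → a = 0 ∨ b = 0

/-- `Q` is a central simple algebra of degree `n`: a simple ring whose center is a
field, and which has dimension `n²` over its center. -/
def IsCSAOfDegree (n : ℕ) (Q : Type u) [Ring Q] : Prop :=
  IsSimpleRing Q ∧
  ∃ (K : Type u) (_ : Field K) (_ : Algebra K Q),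
    (algebraMap K Q).range = Subring.center Q ∧ Module.finrank K Q = n ^ 2

/-- A (prime PI-) ring `R` has PI-degree `n` if its total ring of fractions — the
central localization of `R` at its nonzero central elements — is a central simple
algebra of degree `n`. -/
def HasPIDegree (n : ℕ) (R : Type u) [Ring R] : Prop :=
  ∃ (Q : Type u) (_ : Ring Q) (f : R →+* Q),
    Function.Injective f ∧
    (∀ c ∈ Subring.center R, c ≠ 0 → IsUnit (f c)) ∧
    (∀ q : Q, ∃ r : R, ∃ c ∈ Subring.center R, c ≠ 0 ∧ q * f c = f r) ∧
    IsCSAOfDegree n Q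

/-- The quotient of a ring by a two-sided ideal. -/
abbrev idealQuot {R : Type u} [Ring R] (J : TwoSidedIdeal R) : Type u := J.ringCon.Quotient

/-- `Spec_n(R)`: the set of prime (two-sided) ideals `J` of `R` such that `R/J` is a
prime ring of PI-degree `n`. -/
def SpecN (n : ℕ) (R : Type u) [Ring R] : Set (TwoSidedIdeal R) :=
  {J | IsPrimeRing (idealQuot J) ∧ HasPIDegree n (idealQuot J)}

/-- A regular map of `n`-varieties `X → Y ⊆ U_{l,n}`: a map of the form
`a ↦ (f₁(a), …, f_l(a))` with each `f_i ∈ k_n[X]`, i.e. each component is the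
restriction to `X` of an element of `G_{m,n}`. -/
def IsRegMapOn {n m l : ℕ} (X : Set (MTuple k n m)) (Y : Set (MTuple k n l))
    (φ : MTuple k n m → MTuple k n l) : Prop :=
  (∀ a ∈ X, φ a ∈ Y) ∧
  ∃ F : Fin l → MatPoly k n m, (∀ i, F i ∈ GMN k n m) ∧
    ∀ a ∈ X, ∀ i, φ a i = evalMat k a (F i)

/-- `X` and `Y` are isomorphic `n`-varieties: there are mutually inverse regular
maps of `n`-varieties between them. -/
def NIsomorphic {n m l : ℕ} (X : Set (MTuple k n m)) (Y : Set (MTuple k n l)) : Prop :=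
  ∃ (φ : MTuple k n m → MTuple k n l) (ψ : MTuple k n l → MTuple k n m),
    IsRegMapOn k X Y φ ∧ IsRegMapOn k Y X ψ ∧
    (∀ a ∈ X, ψ (φ a) = a) ∧ (∀ b ∈ Y, φ (ψ b) = b)

-- ===== auxiliary lemmas =====

lemma aux_matrix_prime {n : ℕ} (A B : Matrix (Fin n) (Fin n) k)
    (h : ∀ C : Matrix (Fin n) (Fin n) k, A * C * B = 0) : A = 0 ∨ B = 0 := by
  by_contra hc
  push_neg at hc
  obtain ⟨hA, hB⟩ := hc
  obtain ⟨i, j, hij⟩ : ∃ i j, A i j ≠ 0 := by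
    by_contra h'; push_neg at h'
    exact hA (by ext i j; simp [h'])
  obtain ⟨i', j', hij'⟩ : ∃ i j, B i j ≠ 0 := by
    by_contra h'; push_neg at h'
    exact hB (by ext i j; simp [h'])
  have h1 := h (Matrix.single j i' (1 : k))
  have h2 : (A * Matrix.single j i' (1 : k) * B) i j' = A i j * B i' j' := by
    rw [Matrix.mul_apply,
      Finset.sum_eq_single i' (fun b _ hb => by simp [hb]) (by simp)]
    simp
  rw [h1] at h2
  have : A i j * B i' j' = 0 := h2.symm
  rcases mul_eq_zero.mp this with h | h
  · exact hij h
  · exact hij' h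

lemma aux_evalMat_generic {n m : ℕ} (a : MTuple k n m) (h : Fin m) :
    evalMat k a (genericMatrix k n m h) = a h := by
  ext i j
  simp [evalMat, genericMatrix, polyEval, AlgHom.mapMatrix_apply, Matrix.map_apply]

lemma aux_evalMat_surj {n m : ℕ} (a : MTuple k n m) (ha : a ∈ genTuples k n m) :
    (GMN k n m).map (evalMat k a) = ⊤ := by
  unfold GMN
  rw [AlgHom.map_adjoin]
  have : evalMat k a '' Set.range (genericMatrix k n m) = Set.range a := by
    rw [← Set.range_comp]
    have h2 : (evalMat k a) ∘ (genericMatrix k n m) = a :=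
      funext (aux_evalMat_generic k a)
    rw [h2]
  rw [this]
  exact ha

lemma aux_restrict_traceScalar {n m : ℕ} (X : Set (MTuple k n m)) (p : MatPoly k n m) :
    restrictTo k X (traceScalar k p) =
      fun x : X => Matrix.trace (restrictTo k X p x) • (1 : Matrix (Fin n) (Fin n) k) := by
  funext x
  show evalMat k x.val (traceScalar k p) = _
  have htr : Matrix.trace (evalMat k x.val p) = polyEval k x.val (Matrix.trace p) := by
    simp [Matrix.trace, Matrix.diag, evalMat, AlgHom.mapMatrix_apply, Matrix.map_apply,
      map_sum]
  have : restrictTo k X p x = evalMat k x.val p := rfl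
  rw [this, htr, Matrix.smul_one_eq_diagonal]
  show ((polyEval k x.val).mapMatrix) (traceScalar k p) = _
  rw [traceScalar, AlgHom.mapMatrix_apply, Matrix.algebraMap_eq_diagonal,
    Matrix.diagonal_map (map_zero _)]
  rfl

/-- **Statement 11** (Corollary cor:trace-ring).  For any irreducible `n`-variety
`X`, the quotient `T_{m,n}/I_T(X)` is the trace ring of the prime `k`-algebra
`k_n[X]`.  Here both rings are realized concretely as algebras of
`PGL_n`-equivariant `M_n`-valued functions on `X` (namely as the restrictions to
`X` of the elements of `T_{m,n}`, resp. `G_{m,n}`); the reduced trace of an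
element of `k_n[X]` is then the pointwise matrix trace, viewed as a scalar-matrix
valued function, and the trace ring of `k_n[X]` is the `k`-algebra generated by
`k_n[X]` together with the (reduced) traces of its elements. -/
theorem trace_ring_of_coordinate_ring (n m : ℕ) (hn : 1 ≤ n) (hm : 2 ≤ m)
    (X : Set (MTuple k n m)) (hX : IsNVariety k X) (hirr : IsIrredSubset k X) :
    IsPrimeRing ↥(coordRing k X) ∧
    coordTraceRing k X =
      Algebra.adjoin k
        ((coordRing k X : Set (X → Matrix (Fin n) (Fin n) k)) ∪
         {g | ∃ f ∈ coordRing k X,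
            g = fun x : X => Matrix.trace (f x) • (1 : Matrix (Fin n) (Fin n) k)}) := by
  constructor
  · constructor
    · obtain ⟨a, haX⟩ := hirr.1
      refine nontrivial_of_ne 1 0 fun h10 => ?_
      have h1 := congrFun (congrArg Subtype.val h10) ⟨a, haX⟩
      have : (1 : Matrix (Fin n) (Fin n) k) = 0 := h1
      have hne : 0 < n := hn
      have := congrFun (congrFun this ⟨0, hne⟩) ⟨0, hne⟩
      simp [Matrix.one_apply] at this
    · rintro ⟨F, pF, hpF, hFr⟩ ⟨G, pG, hpG, hGr⟩ hFG
      -- pointwise: for each a ∈ X, F a * C * G a = 0 for all C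
      have key : ∀ a : X, F a = 0 ∨ G a = 0 := by
        intro a
        apply aux_matrix_prime k
        intro C
        have haU : a.val ∈ genTuples k n m := hX.1 a.2
        have : C ∈ (GMN k n m).map (evalMat k a.val) := by
          rw [aux_evalMat_surj k a.val haU]; trivial
        obtain ⟨p, hp, hpev⟩ := this
        have hmem : restrictTo k X p ∈ coordRing k X := ⟨p, hp, rfl⟩
        have := hFG ⟨restrictTo k X p, hmem⟩
        have := congrFun (congrArg Subtype.val this) a
        have hC : restrictTo k X p a = C := hpev
        calc F a * C * G a = F a * restrictTo k X p a * G a := by rw [hC]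
        _ = 0 := this
      -- Zariski closed vanishing sets
      have hZ : ∀ q : MatPoly k n m, IsZClosed k {a | evalMat k a q = 0} := by
        intro q
        refine ⟨Set.range (fun ij : Fin n × Fin n => q ij.1 ij.2), ?_⟩
        ext a
        constructor
        · rintro hq p ⟨⟨i, j⟩, rfl⟩
          have := congrFun (congrFun hq i) j
          exact this
        · intro hq
          ext i j
          exact hq (q i j) ⟨(i, j), rfl⟩
      have hsub : X ⊆ {a | evalMat k a pF = 0} ∪ {a | evalMat k a pG = 0} := by
        intro a ha
        rcases key ⟨a, ha⟩ with h | h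
        · exact Or.inl ((congrFun hFr ⟨a, ha⟩).trans h)
        · exact Or.inr ((congrFun hGr ⟨a, ha⟩).trans h)
      rcases hirr.2 _ _ (hZ pF) (hZ pG) hsub with h | h
      · left
        apply Subtype.ext
        funext a
        have h1 : F a = restrictTo k X pF a := (congrFun hFr a).symm
        exact h1.trans (h a.2)
      · right
        apply Subtype.ext
        funext a
        have h1 : G a = restrictTo k X pG a := (congrFun hGr a).symm
        exact h1.trans (h a.2)
  · -- the trace ring statement
    have h1 : coordTraceRing k X =
        Algebra.adjoin k (restrictTo k X '' (GMN k n m : Set (MatPoly k n m)) ∪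
          restrictTo k X '' (traceScalar k '' (GMN k n m : Set (MatPoly k n m)))) := by
      rw [coordTraceRing, TMN, AlgHom.map_adjoin, Set.image_union]
    have h2 : ⇑(restrictTo k X) '' ((GMN k n m : Set (MatPoly k n m))) =
        (coordRing k X : Set (X → Matrix (Fin n) (Fin n) k)) := rfl
    have h3 : ⇑(restrictTo k X) '' (traceScalar k '' (GMN k n m : Set (MatPoly k n m))) =
        {g | ∃ f ∈ coordRing k X,
          g = fun x : X => Matrix.trace (f x) • (1 : Matrix (Fin n) (Fin n) k)} := by
      ext g
      constructor
      · rintro ⟨_, ⟨p, hp, rfl⟩, rfl⟩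
        exact ⟨restrictTo k X p, ⟨p, hp, rfl⟩, by rw [aux_restrict_traceScalar]⟩
      · rintro ⟨f, ⟨p, hp, rfl⟩, rfl⟩
        exact ⟨traceScalar k p, ⟨p, hp, rfl⟩, aux_restrict_traceScalar k X p⟩
    rw [h1, h2, h3]


end
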